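/- arXiv:0911.4943 — 4 statements merged into one kernel-verified Lean document; each statement's English description precedes it below -/
import Mathlib

section
/- Let G be a group of order 12 with a non-normal subgroup Γ of order 4 such that the Sylow 3-subgroup T is normal; then G is an internal semidirect product T ⋊ Γ, and some nontrivial element of Γ is central in G. -/
/-- Let `G` be a group of order 12 with a normal Sylow 3-subgroup `T` (of order 3)
and a non-normal subgroup `Γ` of order 4 with `T ∩ Γ` trivial. Then `G` is the
internal semidirect product `T ⋊ Γ` (i.e. `T ⊔ Γ = ⊤` with `T` normal and
`T ⊓ Γ = ⊥`), and some nontrivial element of `Γ` is central in `G`. -/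
theorem order_twelve_semidirect_central_element {G : Type*} [Group G]
    (hG : Nat.card G = 12) (T Γ : Subgroup G) [T.Normal]
    (hT : Nat.card T = 3) (hΓ : Nat.card Γ = 4) (hΓnn : ¬ Γ.Normal)
    (hint : T ⊓ Γ = ⊥) :
    T ⊔ Γ = ⊤ ∧ ∃ g ∈ Γ, g ≠ 1 ∧ g ∈ Subgroup.center G := by
  have hfin : Finite G := Nat.finite_of_card_ne_zero (by omega)
  -- `T ⊔ Γ = ⊤` by cardinality
  have h3 : Nat.card T ∣ Nat.card ↥(T ⊔ Γ) := Subgroup.card_dvd_of_le le_sup_left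
  have h4 : Nat.card Γ ∣ Nat.card ↥(T ⊔ Γ) := Subgroup.card_dvd_of_le le_sup_right
  have h12 : Nat.card ↥(T ⊔ Γ) ∣ Nat.card G := Subgroup.card_subgroup_dvd_card _
  rw [hT] at h3; rw [hΓ] at h4; rw [hG] at h12
  have hcard : Nat.card ↥(T ⊔ Γ) = 12 :=
    Nat.dvd_antisymm h12 (Nat.Coprime.mul_dvd_of_dvd_of_dvd (by norm_num) h3 h4)
  have htop : T ⊔ Γ = ⊤ := Subgroup.eq_top_of_card_eq _ (by rw [hcard, hG])
  refine ⟨htop, ?_⟩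
  -- T is cyclic of order 3, so its automorphism group has order 2
  have hTfin : Finite T := Nat.finite_of_card_ne_zero (by omega)
  have : Fact (Nat.Prime 3) := ⟨by norm_num⟩
  have hTcyc : IsCyclic T := isCyclic_of_prime_card hT
  have hAut : Nat.card (MulAut T) = 2 := by
    rw [IsCyclic.card_mulAut, hT]; decide
  -- the conjugation action of Γ on T has nontrivial kernel
  let φ : Γ →* MulAut T := MulAut.conjNormal.comp Γ.subtype
  have hidx : φ.ker.index ∣ 2 := by
    rw [Subgroup.index_ker, ← hAut]; exact Subgroup.card_subgroup_dvd_card _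
  have hkercard : Nat.card φ.ker * φ.ker.index = 4 := by
    rw [Subgroup.card_mul_index, hΓ]
  have hker2 : 1 < Nat.card φ.ker := by
    rcases (Nat.dvd_prime Nat.prime_two).mp hidx with h | h <;> rw [h] at hkercard <;> omega
  have hnt : Nontrivial φ.ker := Finite.one_lt_card_iff_nontrivial.mp hker2
  obtain ⟨g, hg1⟩ := exists_ne (1 : φ.ker)
  have hgker : φ g.1 = 1 := g.2
  have hΓcomm : ∀ a b : Γ, a * b = b * a :=
    IsPGroup.commutative_of_card_eq_prime_sq (p := 2) (by rw [hΓ]; norm_num)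
  refine ⟨g.1.1, g.1.2, ?_, ?_⟩
  · intro h
    exact hg1 (Subtype.ext (Subtype.ext h))
  · rw [Subgroup.mem_center_iff]
    intro h
    have hh : h ∈ ((T ⊔ Γ : Subgroup G) : Set G) := by rw [htop]; trivial
    rw [Subgroup.normal_mul] at hh
    obtain ⟨t, ht, s, hs, rfl⟩ := hh
    have hgt : (g.1.1 : G) * t = t * g.1.1 := by
      have h1 : (φ g.1) ⟨t, ht⟩ = ⟨t, ht⟩ := by rw [hgker]; rfl
      have key : (g.1.1 : G) * t * (g.1.1 : G)⁻¹ = t := by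
        have := congrArg Subtype.val h1
        simpa [φ, MulAut.conjNormal_apply] using this
      calc (g.1.1 : G) * t = (g.1.1 * t * g.1.1⁻¹) * g.1.1 := by group
        _ = t * g.1.1 := by rw [key]
    have hgs : (g.1.1 : G) * s = s * g.1.1 := by
      have := congrArg (Subtype.val) (hΓcomm g.1 ⟨s, hs⟩)
      simpa using this
    show t * s * (g.1.1 : G) = (g.1.1 : G) * (t * s)
    calc t * s * (g.1.1 : G) = t * ((g.1.1 : G) * s) := by rw [mul_assoc, ← hgs]
      _ = (t * (g.1.1 : G)) * s := (mul_assoc _ _ _).symm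
      _ = (g.1.1 : G) * (t * s) := by rw [← hgt, mul_assoc]
end

section
/- Let R be a finite-dimensional algebra over a field k graded by a group G, with support contained in {1, s_1, …, s_n} where each s_i has order 2 and s_i s_j ≠ s_l for all indices i ≠ j and all l ≥ 1 (i.e., the product of any two distinct support elements other than 1 lies outside the support), and suppose each graded component R_{s_i} is one-dimensional and R_1 = k·1. If n ≥ 2, then R has a nonzero nilpotent ideal; in particular R is not semisimple. -/
/-- Let `R` be a finite-dimensional algebra over a field `k`, graded by a group `G`
(via a decomposition `R = ⊕_g ℬ g` with `ℬ g * ℬ h ⊆ ℬ (g*h)`), whose support is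
contained in `{1, s 1, …, s n}` where the `s i` are distinct elements of order 2
such that the product of two distinct `s i`'s lies outside the support.
Assume `ℬ 1 = k·1`, each `ℬ (s i)` is one-dimensional, and `n ≥ 2`. Then `R` has
a nonzero nilpotent (indeed square-zero) two-sided ideal; in particular `R` is
not a semisimple ring. -/
theorem graded_by_involutions_not_semisimple
    {k : Type*} [Field k] {R : Type*} [Ring R] [Algebra k R] [FiniteDimensional k R]
    {G : Type*} [Group G] [DecidableEq G]
    (ℬ : G → Submodule k R) [DirectSum.Decomposition ℬ]
    (hone : (1 : R) ∈ ℬ 1)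
    (hmul : ∀ g h : G, ∀ x ∈ ℬ g, ∀ y ∈ ℬ h, x * y ∈ ℬ (g * h))
    (n : ℕ) (hn : 2 ≤ n) (s : Fin n → G) (hinj : Function.Injective s)
    (hs1 : ∀ i, s i ≠ 1) (hord : ∀ i, orderOf (s i) = 2)
    (hprod : ∀ i j, i ≠ j → ∀ l, s i * s j ≠ s l)
    (hB1 : ℬ 1 = Submodule.span k {(1 : R)})
    (hBs : ∀ i, Module.finrank k (ℬ (s i)) = 1)
    (hsupp : ∀ g : G, g ≠ 1 → (∀ i, g ≠ s i) → ℬ g = ⊥) :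
    (∃ I : TwoSidedIdeal R, I ≠ ⊥ ∧ ∀ x ∈ I, ∀ y ∈ I, x * y = 0) ∧
      ¬ IsSemisimpleRing R := by
  classical
  -- basic facts about the `s i`
  have hsq : ∀ i, s i * s i = 1 := by
    intro i
    have := pow_orderOf_eq_one (s i)
    rwa [hord i, pow_two] at this
  have hne1 : ∀ i j, i ≠ j → s i * s j ≠ 1 := by
    intro i j hij h
    exact hij (hinj ((eq_inv_of_mul_eq_one_right h).trans
      (inv_eq_of_mul_eq_one_right (hsq i))).symm)
  -- products of distinct components vanish
  have hzero : ∀ i j, i ≠ j → ∀ x ∈ ℬ (s i), ∀ y ∈ ℬ (s j), x * y = 0 := by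
    intro i j hij x hx y hy
    have h := hmul _ _ x hx y hy
    rw [hsupp (s i * s j) (hne1 i j hij) (fun l => hprod i j hij l)] at h
    simpa using h
  -- choose nonzero elements of the first two components
  set i₀ : Fin n := ⟨0, by omega⟩ with hi₀
  set i₁ : Fin n := ⟨1, by omega⟩ with hi₁
  have hi01 : i₀ ≠ i₁ := by simp [hi₀, hi₁, Fin.ext_iff]
  have hxex : ∀ i, ∃ x ∈ ℬ (s i), x ≠ 0 := by
    intro i
    have : ℬ (s i) ≠ ⊥ := by
      intro h
      have := hBs i
      rw [h] at this
      simp at this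
    obtain ⟨x, hx, hx0⟩ := Submodule.exists_mem_ne_zero_of_ne_bot this
    exact ⟨x, hx, hx0⟩
  obtain ⟨x₀, hx₀, hx₀0⟩ := hxex i₀
  obtain ⟨x₁, hx₁, hx₁0⟩ := hxex i₁
  -- `x₀ * x₀ = 0`
  have hx00 : x₀ * x₀ = 0 := by
    have h1 : x₀ * x₀ ∈ Submodule.span k {(1 : R)} := by
      have := hmul _ _ x₀ hx₀ x₀ hx₀
      rwa [hsq, hB1] at this
    obtain ⟨c, hc⟩ := Submodule.mem_span_singleton.mp h1
    have h01 : x₀ * x₁ = 0 := hzero i₀ i₁ hi01 x₀ hx₀ x₁ hx₁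
    have : c • x₁ = 0 := by
      calc c • x₁ = (c • (1 : R)) * x₁ := by rw [smul_mul_assoc, one_mul]
        _ = (x₀ * x₀) * x₁ := by rw [hc]
        _ = x₀ * (x₀ * x₁) := by rw [mul_assoc]
        _ = 0 := by rw [h01, mul_zero]
    rcases smul_eq_zero.mp this with hc0 | h
    · rw [← hc, hc0, zero_smul]
    · exact absurd h hx₁0
  -- key lemma: multiplication by `x₀` lands in `k • x₀`
  set S : Submodule k R := Submodule.span k {x₀} with hS
  have key : ∀ r : R, x₀ * r ∈ S ∧ r * x₀ ∈ S := by
    have hhom : ∀ (g : G) (r : R), r ∈ ℬ g → x₀ * r ∈ S ∧ r * x₀ ∈ S := by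
      intro g r hr
      by_cases hg1 : g = 1
      · subst hg1
        rw [hB1] at hr
        obtain ⟨a, ha⟩ := Submodule.mem_span_singleton.mp hr
        constructor
        · rw [← ha, mul_smul_comm, mul_one]
          exact Submodule.smul_mem _ a (Submodule.mem_span_singleton_self _)
        · rw [← ha, smul_mul_assoc, one_mul]
          exact Submodule.smul_mem _ a (Submodule.mem_span_singleton_self _)
      · by_cases hgs : ∃ j, g = s j
        · obtain ⟨j, rfl⟩ := hgs
          by_cases hj : j = i₀
          · subst hj
            constructor
            · have h1 : x₀ * r ∈ Submodule.span k {(1 : R)} := by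
                have := hmul _ _ x₀ hx₀ r hr
                rwa [hsq, hB1] at this
              obtain ⟨a, ha⟩ := Submodule.mem_span_singleton.mp h1
              have : a • x₀ = 0 := by
                calc a • x₀ = x₀ * (a • (1 : R)) := by rw [mul_smul_comm, mul_one]
                  _ = x₀ * (x₀ * r) := by rw [ha]
                  _ = (x₀ * x₀) * r := by rw [mul_assoc]
                  _ = 0 := by rw [hx00, zero_mul]
              rcases smul_eq_zero.mp this with ha0 | h
              · rw [← ha, ha0, zero_smul]; exact Submodule.zero_mem _
              · exact absurd h hx₀0
            · have h1 : r * x₀ ∈ Submodule.span k {(1 : R)} := by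
                have := hmul _ _ r hr x₀ hx₀
                rwa [hsq, hB1] at this
              obtain ⟨a, ha⟩ := Submodule.mem_span_singleton.mp h1
              have : a • x₀ = 0 := by
                calc a • x₀ = (a • (1 : R)) * x₀ := by rw [smul_mul_assoc, one_mul]
                  _ = (r * x₀) * x₀ := by rw [ha]
                  _ = r * (x₀ * x₀) := by rw [mul_assoc]
                  _ = 0 := by rw [hx00, mul_zero]
              rcases smul_eq_zero.mp this with ha0 | h
              · rw [← ha, ha0, zero_smul]; exact Submodule.zero_mem _
              · exact absurd h hx₀0
          · have h1 : x₀ * r = 0 := hzero i₀ j (Ne.symm hj) x₀ hx₀ r hr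
            have h2 : r * x₀ = 0 := hzero j i₀ hj r hr x₀ hx₀
            rw [h1, h2]
            exact ⟨Submodule.zero_mem _, Submodule.zero_mem _⟩
        · push_neg at hgs
          rw [hsupp g hg1 hgs] at hr
          rw [Submodule.mem_bot] at hr
          subst hr
          rw [mul_zero, zero_mul]
          exact ⟨Submodule.zero_mem _, Submodule.zero_mem _⟩
    refine DirectSum.Decomposition.inductionOn ℬ ?_ ?_ ?_
    · rw [mul_zero, zero_mul]; exact ⟨Submodule.zero_mem _, Submodule.zero_mem _⟩
    · intro g m; exact hhom g m m.2
    · intro m m' hm hm'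
      rw [mul_add, add_mul]
      exact ⟨Submodule.add_mem _ hm.1 hm'.1, Submodule.add_mem _ hm.2 hm'.2⟩
  -- square-zero property of `S`
  have hSsq : ∀ x ∈ S, ∀ y ∈ S, x * y = 0 := by
    intro x hx y hy
    obtain ⟨a, rfl⟩ := Submodule.mem_span_singleton.mp hx
    obtain ⟨b, rfl⟩ := Submodule.mem_span_singleton.mp hy
    rw [smul_mul_assoc, mul_smul_comm, hx00, smul_zero, smul_zero]
  -- the two-sided ideal
  have hI : ∃ I : TwoSidedIdeal R, I ≠ ⊥ ∧ ∀ x ∈ I, ∀ y ∈ I, x * y = 0 := by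
    refine ⟨TwoSidedIdeal.mk' (S : Set R) (Submodule.zero_mem _)
      (fun hx hy => Submodule.add_mem _ hx hy)
      (fun hx => Submodule.neg_mem _ hx) ?_ ?_, ?_, ?_⟩
    · intro x y hy
      obtain ⟨a, rfl⟩ := Submodule.mem_span_singleton.mp hy
      rw [mul_smul_comm]
      exact Submodule.smul_mem _ a (key x).2
    · intro x y hx
      obtain ⟨a, rfl⟩ := Submodule.mem_span_singleton.mp hx
      rw [smul_mul_assoc]
      exact Submodule.smul_mem _ a (key y).1
    · intro h
      have hx₀S : x₀ ∈ S := Submodule.mem_span_singleton_self _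
      have : x₀ ∈ (⊥ : TwoSidedIdeal R) := by
        rw [← h, TwoSidedIdeal.mem_mk']
        exact hx₀S
      exact hx₀0 this
    · intro x hx y hy
      rw [TwoSidedIdeal.mem_mk'] at hx hy
      exact hSsq x hx y hy
  refine ⟨hI, ?_⟩
  -- not semisimple
  intro hss
  obtain ⟨e, he, hspan⟩ := IsSemisimpleRing.ideal_eq_span_idempotent (Ideal.span {x₀})
  have heS : e ∈ S := by
    have : e ∈ Ideal.span {x₀} := by
      rw [hspan]; exact Ideal.subset_span rfl
    obtain ⟨r, hr⟩ := Submodule.mem_span_singleton.mp this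
    rw [smul_eq_mul] at hr
    rw [← hr]
    exact (key r).2
  have he0 : e = 0 := by
    have := hSsq e heS e heS
    rwa [he.eq] at this
  subst he0
  have hbot : Ideal.span {x₀} = ⊥ := hspan.trans (Ideal.span_singleton_eq_bot.mpr rfl)
  have : x₀ ∈ (⊥ : Ideal R) := hbot ▸ Ideal.subset_span rfl
  exact hx₀0 (Submodule.mem_bot _ |>.mp this)
end

section
/- Let n ≥ 3 be odd and let R = ⊕_{x ∈ D_n} R_x be a finite-dimensional D_n-graded k-algebra with dim R = n+1, dim R_1 = 1 spanned by the identity, such that the support of the grading is {1} together with all n reflections and each nonidentity graded component is one-dimensional. Then R is not a semisimple algebra. -/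
/-!
Pick nonzero homogeneous elements in two different reflection components. Since `R_1 = k·1`
and products of distinct reflections are nontrivial rotations, whose components vanish, every
product of two reflection-homogeneous elements is zero. Hence for `v ≠ 0` in a reflection
component, `v R v = 0`; but in a semisimple ring the left ideal `R v` has a complement, which
forces `v = 0`.
-/

theorem IsSemisimpleRing.eq_zero_of_forall_mul_mul_eq_zero {R : Type*} [Ring R]
    [IsSemisimpleRing R] {a : R} (h : ∀ x, a * x * a = 0) : a = 0 := by
  obtain ⟨J, hJ⟩ := exists_isCompl (Submodule.span R {a})
  obtain ⟨e, he, f, hf, hef⟩ :=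
    Submodule.mem_sup.mp (hJ.sup_eq_top ▸ Submodule.mem_top : (1 : R) ∈ _ ⊔ J)
  obtain ⟨x, rfl⟩ := Submodule.mem_span_singleton.mp he
  have haf : a = a * f := by
    calc a = a * (x • a + f) := by rw [hef, mul_one]
      _ = a * f := by rw [mul_add, smul_eq_mul, ← mul_assoc, h, zero_add]
  have haJ : a ∈ J := haf ▸ J.smul_mem a hf
  exact Submodule.disjoint_def.mp hJ.disjoint a (Submodule.mem_span_singleton_self a) haJ

namespace DihedralGroup

variable {k R : Type*} [Field k] [Ring R] [Algebra k R] {n : ℕ}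
  {ℬ : DihedralGroup n → Submodule k R}
  (hmul : ∀ g h : DihedralGroup n, ∀ x ∈ ℬ g, ∀ y ∈ ℬ h, x * y ∈ ℬ (g * h))
include hmul

theorem graded_mul_eq_zero_of_mem_sr_of_ne
    (hrot : ∀ i : ZMod n, i ≠ 0 → ℬ (r i) = ⊥) {i j : ZMod n} (hij : i ≠ j)
    {x y : R} (hx : x ∈ ℬ (sr i)) (hy : y ∈ ℬ (sr j)) : x * y = 0 := by
  have hxy := hmul _ _ x hx y hy
  rwa [sr_mul_sr, hrot _ (sub_ne_zero.mpr hij.symm), Submodule.mem_bot] at hxy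

/-- If `w ≠ 0` lies in another reflection component, then `w * (x * y) = (w * x) * y = 0`
with `x * y` a scalar, so that scalar is `0`. -/
theorem graded_mul_eq_zero_of_mem_sr_self
    (hB1 : ℬ 1 = Submodule.span k {(1 : R)}) (hrot : ∀ i : ZMod n, i ≠ 0 → ℬ (r i) = ⊥)
    {i j : ZMod n} (hij : i ≠ j) (hj : ℬ (sr j) ≠ ⊥)
    {x y : R} (hx : x ∈ ℬ (sr i)) (hy : y ∈ ℬ (sr i)) : x * y = 0 := by
  obtain ⟨w, hw, hw0⟩ := Submodule.ne_bot_iff _ |>.mp hj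
  have hxy := hmul _ _ x hx y hy
  rw [sr_mul_sr, sub_self, ← one_def, hB1, Submodule.mem_span_singleton] at hxy
  obtain ⟨c, hc⟩ := hxy
  have hwx : w * x = 0 := graded_mul_eq_zero_of_mem_sr_of_ne hmul hrot hij.symm hw hx
  have hcw : c • w = 0 := by
    calc c • w = w * (c • (1 : R)) := by rw [mul_smul_comm, mul_one]
      _ = 0 := by rw [hc, ← mul_assoc, hwx, zero_mul]
  rw [← hc, (smul_eq_zero.mp hcw).resolve_right hw0, zero_smul]

theorem graded_mul_eq_zero_of_mem_sr
    (hB1 : ℬ 1 = Submodule.span k {(1 : R)}) (hrot : ∀ i : ZMod n, i ≠ 0 → ℬ (r i) = ⊥)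
    {a b : ZMod n} (hab : a ≠ b) (ha : ℬ (sr a) ≠ ⊥) (hb : ℬ (sr b) ≠ ⊥)
    (i j : ZMod n) (x : R) (hx : x ∈ ℬ (sr i)) (y : R) (hy : y ∈ ℬ (sr j)) : x * y = 0 := by
  by_cases hij : i = j
  · subst hij
    by_cases hia : i = a
    · exact graded_mul_eq_zero_of_mem_sr_self hmul hB1 hrot (hia ▸ hab) hb hx hy
    · exact graded_mul_eq_zero_of_mem_sr_self hmul hB1 hrot hia ha hx hy
  · exact graded_mul_eq_zero_of_mem_sr_of_ne hmul hrot hij hx hy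

theorem graded_mul_mul_self_eq_zero [DirectSum.Decomposition ℬ]
    (hsr : ∀ i j : ZMod n, ∀ x ∈ ℬ (sr i), ∀ y ∈ ℬ (sr j), x * y = 0)
    {i : ZMod n} {v : R} (hv : v ∈ ℬ (sr i)) (y : R) : v * y * v = 0 := by
  induction y using DirectSum.Decomposition.inductionOn ℬ with
  | zero => rw [mul_zero, zero_mul]
  | add y z hy hz => rw [mul_add, add_mul, hy, hz, add_zero]
  | @homogeneous g y =>
    cases g with
    | r j =>
      have hvy := hmul _ _ v hv y y.2
      rw [sr_mul_r] at hvy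
      exact hsr _ _ _ hvy v hv
    | sr j => rw [hsr _ _ v hv y y.2, zero_mul]

end DihedralGroup

theorem dihedral_graded_algebra_not_semisimple_general
    {k : Type*} [Field k] {R : Type*} [Ring R] [Algebra k R]
    (n : ℕ) (hn : 3 ≤ n)
    (ℬ : DihedralGroup n → Submodule k R) [DirectSum.Decomposition ℬ]
    (hmul : ∀ g h : DihedralGroup n, ∀ x ∈ ℬ g, ∀ y ∈ ℬ h, x * y ∈ ℬ (g * h))
    (hB1 : ℬ 1 = Submodule.span k {(1 : R)})
    (hrot : ∀ i : ZMod n, i ≠ 0 → ℬ (DihedralGroup.r i) = ⊥)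
    (hrefl : ∀ i : ZMod n, Module.finrank k (ℬ (DihedralGroup.sr i)) = 1) :
    ¬ IsSemisimpleRing R := by
  intro _
  have : Fact (1 < n) := ⟨by omega⟩
  have hne : ∀ i : ZMod n, ℬ (DihedralGroup.sr i) ≠ ⊥ := fun i h => by
    have hi := hrefl i
    rw [h, finrank_bot] at hi
    exact zero_ne_one hi
  have hsr := DihedralGroup.graded_mul_eq_zero_of_mem_sr hmul hB1 hrot zero_ne_one (hne 0) (hne 1)
  obtain ⟨v, hv, hv0⟩ := Submodule.ne_bot_iff _ |>.mp (hne 0)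
  exact hv0 (IsSemisimpleRing.eq_zero_of_forall_mul_mul_eq_zero
    (DihedralGroup.graded_mul_mul_self_eq_zero hmul hsr hv))

/-- Let `n ≥ 3` be odd and let `R = ⊕_{x ∈ D_n} R_x` be a finite-dimensional
`D_n`-graded algebra over a field `k` with `dim R = n + 1`, with `R_1 = k·1`,
whose support consists of `1` together with all `n` reflections (i.e. the
components at nontrivial rotations vanish), each reflection component being
one-dimensional. Then `R` is not a semisimple ring. -/
theorem dihedral_graded_algebra_not_semisimple
    {k : Type*} [Field k] {R : Type*} [Ring R] [Algebra k R] [FiniteDimensional k R]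
    (n : ℕ) (hn : 3 ≤ n) (hodd : Odd n)
    (ℬ : DihedralGroup n → Submodule k R) [DirectSum.Decomposition ℬ]
    (hone : (1 : R) ∈ ℬ 1)
    (hmul : ∀ g h : DihedralGroup n, ∀ x ∈ ℬ g, ∀ y ∈ ℬ h, x * y ∈ ℬ (g * h))
    (hdim : Module.finrank k R = n + 1)
    (hB1 : ℬ 1 = Submodule.span k {(1 : R)})
    (hrot : ∀ i : ZMod n, i ≠ 0 → ℬ (DihedralGroup.r i) = ⊥)
    (hrefl : ∀ i : ZMod n, Module.finrank k (ℬ (DihedralGroup.sr i)) = 1) :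
    ¬ IsSemisimpleRing R :=
  dihedral_graded_algebra_not_semisimple_general n hn ℬ hmul hB1 hrot hrefl
end

section
/- Let R = ⊕_{x ∈ A_4} R_x be a finite-dimensional A_4-graded k-algebra with dim R = 5, dim R_1 = 1 spanned by the identity, whose support is {1} ∪ C where C is a conjugacy class of 3-cycles, each nonidentity component one-dimensional. Then R is not semisimple, since the span of the nonidentity components is a nonzero ideal with zero multiplication. -/
/-!
Under `A₄ → A₄ ⧸ V₄ ≅ C₃` the class `C` maps to a single generator `a`, so a product of two
elements of `C` maps to `a²` and lies outside `{1} ∪ C`. Hence any two nonidentity components of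
the grading multiply to zero, and the span of the nonidentity components is a nonzero square-zero
two-sided ideal. A semisimple ring has no such ideal, since a complement of it as a left ideal
would have to contain it.
-/

theorem IsSemisimpleRing.eq_bot_of_mul_eq_zero {R : Type*} [Ring R] [IsSemisimpleRing R]
    (L : Submodule R R) (hL : ∀ x ∈ L, ∀ y ∈ L, x * y = 0) : L = ⊥ := by
  obtain ⟨J, hJ⟩ := exists_isCompl L
  obtain ⟨e, he, f, hf, hef⟩ := Submodule.mem_sup.mp (hJ.sup_eq_top ▸ Submodule.mem_top (x := 1))
  refine eq_bot_iff.2 fun v hv => hJ.inf_eq_bot ▸ ⟨hv, ?_⟩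
  have hv_eq : v = v * f := by rw [← zero_add (v * f), ← hL v hv e he, ← mul_add, hef, mul_one]
  exact hv_eq ▸ J.smul_mem v hf

section ToTwoSidedIdeal

variable {k R : Type*} [CommRing k] [Ring R] [Algebra k R]

def Submodule.toTwoSidedIdeal (S : Submodule k R) (hl : ⊤ * S ≤ S) (hr : S * ⊤ ≤ S) :
    TwoSidedIdeal R :=
  TwoSidedIdeal.mk' S S.zero_mem S.add_mem S.neg_mem
    (fun hy => hl (Submodule.mul_mem_mul Submodule.mem_top hy))
    (fun hx => hr (Submodule.mul_mem_mul hx Submodule.mem_top))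

@[simp]
theorem Submodule.mem_toTwoSidedIdeal {S : Submodule k R} {hl : ⊤ * S ≤ S} {hr : S * ⊤ ≤ S}
    {x : R} : x ∈ S.toTwoSidedIdeal hl hr ↔ x ∈ S :=
  TwoSidedIdeal.mem_mk' (S : Set R) _ _ _ _ _ x

end ToTwoSidedIdeal

section GradedSquareZero

variable {ι k R : Type*} [MulOneClass ι] [CommSemiring k] [Semiring R] [Algebra k R]
  (ℬ : ι → Submodule k R)

theorem iSup_ne_one_mul_self_eq_bot
    (hzero : ∀ g h : ι, g ≠ 1 → h ≠ 1 → ℬ g * ℬ h = ⊥) :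
    (⨆ g ≠ 1, ℬ g) * (⨆ g ≠ 1, ℬ g) = ⊥ := by
  simp only [Submodule.iSup_mul, Submodule.mul_iSup, iSup_eq_bot]
  exact fun h hh g hg => hzero g h hg hh

theorem top_mul_iSup_ne_one_le (hmul : ∀ g h : ι, ℬ g * ℬ h ≤ ℬ (g * h))
    (hzero : ∀ g h : ι, g ≠ 1 → h ≠ 1 → ℬ g * ℬ h = ⊥) (hspan : ⨆ g, ℬ g = ⊤) :
    ⊤ * (⨆ g ≠ 1, ℬ g) ≤ ⨆ g ≠ 1, ℬ g := by
  simp only [← hspan, Submodule.iSup_mul, Submodule.mul_iSup, iSup_le_iff]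
  intro g hg h
  rcases eq_or_ne h 1 with rfl | hh
  · exact (one_mul g ▸ hmul 1 g).trans (le_biSup ℬ hg)
  · exact (hzero h g hh hg).le.trans bot_le

theorem iSup_ne_one_mul_top_le (hmul : ∀ g h : ι, ℬ g * ℬ h ≤ ℬ (g * h))
    (hzero : ∀ g h : ι, g ≠ 1 → h ≠ 1 → ℬ g * ℬ h = ⊥) (hspan : ⨆ g, ℬ g = ⊤) :
    (⨆ g ≠ 1, ℬ g) * ⊤ ≤ ⨆ g ≠ 1, ℬ g := by
  simp only [← hspan, Submodule.iSup_mul, Submodule.mul_iSup, iSup_le_iff]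
  intro h g hg
  rcases eq_or_ne h 1 with rfl | hh
  · exact (mul_one g ▸ hmul g 1).trans (le_biSup ℬ hg)
  · exact (hzero g h hg hh).le.trans bot_le

end GradedSquareZero

theorem alternatingGroup.fin_four_mul_ne_one_and_not_isConj {c x y : alternatingGroup (Fin 4)}
    (hc : Equiv.Perm.IsThreeCycle (c : Equiv.Perm (Fin 4))) (hx : IsConj c x) (hy : IsConj c y) :
    x * y ≠ 1 ∧ ¬ IsConj c (x * y) := by
  have h_order_three : ∀ c x y : alternatingGroup (Fin 4), c ^ 3 = 1 → c ≠ 1 →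
      IsConj c x → IsConj c y → x * y ≠ 1 ∧ ¬ IsConj c (x * y) := by
    decide
  have hc_order : orderOf c = 3 := Subgroup.orderOf_coe c ▸ hc.orderOf
  exact h_order_three c x y (hc_order ▸ pow_orderOf_eq_one c)
    (fun h => hc.ne_one (by rw [h]; rfl)) hx hy

theorem alternatingGroup.fin_four_component_mul_eq_bot {k R : Type*} [CommSemiring k] [Semiring R]
    [Algebra k R] (ℬ : alternatingGroup (Fin 4) → Submodule k R)
    (hmul : ∀ g h, ℬ g * ℬ h ≤ ℬ (g * h)) {c : alternatingGroup (Fin 4)}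
    (hc : Equiv.Perm.IsThreeCycle (c : Equiv.Perm (Fin 4)))
    (hsupp : ∀ x, x ≠ 1 → ¬ IsConj c x → ℬ x = ⊥) {g h : alternatingGroup (Fin 4)}
    (hg : g ≠ 1) (hh : h ≠ 1) : ℬ g * ℬ h = ⊥ := by
  by_cases hcg : IsConj c g
  swap; · rw [hsupp g hg hcg, Submodule.bot_mul]
  by_cases hch : IsConj c h
  swap; · rw [hsupp h hh hch, Submodule.mul_bot]
  obtain ⟨hgh_ne_one, hgh_not_conj⟩ := fin_four_mul_ne_one_and_not_isConj hc hcg hch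
  exact eq_bot_iff.2 (hsupp _ hgh_ne_one hgh_not_conj ▸ hmul g h)

theorem a4_graded_algebra_not_semisimple_general
    {k : Type*} [Field k] {R : Type*} [Ring R] [Algebra k R]
    (ℬ : alternatingGroup (Fin 4) → Submodule k R) [DirectSum.Decomposition ℬ]
    (hmul : ∀ g h : alternatingGroup (Fin 4), ∀ x ∈ ℬ g, ∀ y ∈ ℬ h, x * y ∈ ℬ (g * h))
    (c : alternatingGroup (Fin 4))
    (hc : Equiv.Perm.IsThreeCycle (c : Equiv.Perm (Fin 4)))
    (hsupp : ∀ x : alternatingGroup (Fin 4), x ≠ 1 → ¬ IsConj c x → ℬ x = ⊥)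
    (hcls : ∀ x : alternatingGroup (Fin 4), IsConj c x → Module.finrank k (ℬ x) = 1) :
    (∃ I : TwoSidedIdeal R, I ≠ ⊥ ∧ ∀ x ∈ I, ∀ y ∈ I, x * y = 0) ∧
      ¬ IsSemisimpleRing R := by
  have hc_one : c ≠ 1 := fun h => hc.ne_one (by rw [h]; rfl)
  have hmul_le : ∀ g h, ℬ g * ℬ h ≤ ℬ (g * h) := fun g h => Submodule.mul_le.2 (hmul g h)
  have hzero : ∀ g h, g ≠ 1 → h ≠ 1 → ℬ g * ℬ h = ⊥ := fun g h =>
    alternatingGroup.fin_four_component_mul_eq_bot ℬ hmul_le hc hsupp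
  have hspan := (DirectSum.Decomposition.isInternal ℬ).submodule_iSup_eq_top
  set S := ⨆ g ≠ 1, ℬ g
  have hS_sq : ∀ x ∈ S, ∀ y ∈ S, x * y = 0 := fun x hx y hy =>
    (Submodule.mem_bot k).1 (iSup_ne_one_mul_self_eq_bot ℬ hzero ▸ Submodule.mul_mem_mul hx hy)
  have hBc : ℬ c ≠ ⊥ := fun h => by
    have hBc_rank := hcls c (IsConj.refl c)
    rw [h, finrank_bot] at hBc_rank
    exact zero_ne_one hBc_rank
  obtain ⟨v, hvc, hv0⟩ := Submodule.exists_mem_ne_zero_of_ne_bot hBc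
  have hvS : v ∈ S := le_biSup ℬ hc_one hvc
  let I := S.toTwoSidedIdeal (top_mul_iSup_ne_one_le ℬ hmul_le hzero hspan)
    (iSup_ne_one_mul_top_le ℬ hmul_le hzero hspan)
  have hI_sq : ∀ x ∈ I, ∀ y ∈ I, x * y = 0 := fun x hx y hy =>
    hS_sq x (Submodule.mem_toTwoSidedIdeal.1 hx) y (Submodule.mem_toTwoSidedIdeal.1 hy)
  have hvI : v ∈ I := Submodule.mem_toTwoSidedIdeal.2 hvS
  refine ⟨⟨I, fun hI => hv0 ((TwoSidedIdeal.mem_bot R).1 (hI ▸ hvI)), hI_sq⟩, fun _ => hv0 ?_⟩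
  exact (Submodule.eq_bot_iff _).1 (IsSemisimpleRing.eq_bot_of_mul_eq_zero I.asIdeal hI_sq) v hvI

/-- Let `R = ⊕_{x ∈ A₄} R_x` be a finite-dimensional `A₄`-graded algebra over a
field `k` with `dim R = 5`, `R_1 = k·1`, whose support is `{1} ∪ C` where `C` is
the conjugacy class (in `A₄`) of a 3-cycle `c`, each nonidentity component being
one-dimensional. Then `R` is not semisimple: the span of the nonidentity
components is a nonzero two-sided ideal with zero multiplication. -/
theorem a4_graded_algebra_not_semisimple
    {k : Type*} [Field k] {R : Type*} [Ring R] [Algebra k R] [FiniteDimensional k R]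
    (ℬ : alternatingGroup (Fin 4) → Submodule k R) [DirectSum.Decomposition ℬ]
    (hone : (1 : R) ∈ ℬ 1)
    (hmul : ∀ g h : alternatingGroup (Fin 4), ∀ x ∈ ℬ g, ∀ y ∈ ℬ h, x * y ∈ ℬ (g * h))
    (c : alternatingGroup (Fin 4))
    (hc : Equiv.Perm.IsThreeCycle (c : Equiv.Perm (Fin 4)))
    (hdim : Module.finrank k R = 5)
    (hB1 : ℬ 1 = Submodule.span k {(1 : R)})
    (hsupp : ∀ x : alternatingGroup (Fin 4), x ≠ 1 → ¬ IsConj c x → ℬ x = ⊥)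
    (hcls : ∀ x : alternatingGroup (Fin 4), IsConj c x → Module.finrank k (ℬ x) = 1) :
    (∃ I : TwoSidedIdeal R, I ≠ ⊥ ∧ ∀ x ∈ I, ∀ y ∈ I, x * y = 0) ∧
      ¬ IsSemisimpleRing R :=
  a4_graded_algebra_not_semisimple_general ℬ hmul c hc hsupp hcls
end
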